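/- With a = ρ₂|h₂|² and b = ρ_e ln(1/ε) both positive, if a > b/(1+b) then the strictly concave function R₂ˢ(φ₂) = log₂(1 + φ₂a) - log₂(1 + φ₂b/(1+(1-φ₂)b)) is positive at its maximizer φ₂* = 1/2 + 1/(2b) - 1/(2a), and moreover R₂ˢ(φ₂) > 0 for all sufficiently small φ₂ > 0. -/

import Mathlib

/-!
For `0 < x` the rate is positive iff the eavesdropper's SINR `x b / (1 + (1 - x) b)` is below the
legitimate SINR `x a`, and after clearing denominators this is the linear condition
`x < 1 + 1/b - 1/a`. The maximizer `φ₂*` is half of this threshold, and the threshold is positive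
exactly when `a > b / (1 + b)`.
-/

noncomputable def secrecyRate (a b x : ℝ) : ℝ :=
  Real.logb 2 (1 + x * a) - Real.logb 2 (1 + x * b / (1 + (1 - x) * b))

lemma secrecyRate_pos {a b x : ℝ} (ha : 0 < a) (hb : 0 < b) (hx : 0 < x)
    (hx_lt : x < 1 + 1 / b - 1 / a) : 0 < secrecyRate a b x := by
  have hab : a * b * x < a * b + a - b := by
    have := mul_lt_mul_of_pos_left hx_lt (mul_pos ha hb)
    field_simp at this
    linarith
  have hd : 0 < 1 + (1 - x) * b := by nlinarith
  have hsinr : x * b / (1 + (1 - x) * b) < x * a := by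
    rw [div_lt_iff₀ hd]
    nlinarith
  have heve : 0 < 1 + x * b / (1 + (1 - x) * b) := by positivity
  exact sub_pos.2 (Real.logb_lt_logb one_lt_two heve (by linarith))

lemma one_add_inv_sub_inv_pos {a b : ℝ} (ha : 0 < a) (hb : 0 < b) (hfeas : b / (1 + b) < a) :
    0 < 1 + 1 / b - 1 / a := by
  rw [div_lt_iff₀ (by linarith)] at hfeas
  calc (0 : ℝ) < (a * b + a - b) / (a * b) := div_pos (by linarith) (by positivity)
    _ = 1 + 1 / b - 1 / a := by field_simp

/-- If a > b/(1+b) then the asymptotic secrecy rate is positive at its maximizer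
φ₂* = 1/2 + 1/(2b) − 1/(2a), and positive for all sufficiently small φ₂ > 0. -/
theorem stmt12 (a b : ℝ) (ha : 0 < a) (hb : 0 < b) (hfeas : b / (1 + b) < a) :
    (0 < Real.logb 2 (1 + (1 / 2 + 1 / (2 * b) - 1 / (2 * a)) * a)
        - Real.logb 2 (1 + (1 / 2 + 1 / (2 * b) - 1 / (2 * a)) * b
            / (1 + (1 - (1 / 2 + 1 / (2 * b) - 1 / (2 * a))) * b))) ∧
    ∃ δ > (0:ℝ), ∀ x : ℝ, 0 < x → x < δ →
      0 < Real.logb 2 (1 + x * a)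
          - Real.logb 2 (1 + x * b / (1 + (1 - x) * b)) := by
  have hthr := one_add_inv_sub_inv_pos ha hb hfeas
  have hmax : 1 / 2 + 1 / (2 * b) - 1 / (2 * a) = (1 + 1 / b - 1 / a) / 2 := by ring
  refine ⟨?_, 1 + 1 / b - 1 / a, hthr, fun x hx hxδ => secrecyRate_pos ha hb hx hxδ⟩
  rw [hmax]
  exact secrecyRate_pos ha hb (by linarith) (by linarith)
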